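/- arXiv:1104.2936 — 7 statements merged into one kernel-verified Lean document; each statement's English description precedes it below -/
import Mathlib

section
/- For any quantale Q, the functor A ↦ Q^A on Set carries a monad structure (with unit η(a) = λb. [a = b] using the quantale unit, and multiplication given by matrix composition), and this monad is semi-additive with δ = the constant-bottom function and ϖ = pointwise join. -/
/-! Every law comes from `·` distributing over `⨆`: `⊥` is the empty join, hence absorbing,
so the unit laws collapse the join to a single term, and associativity is the interchange
of two joins. -/

universe u v

open scoped Classical

/-- The quantale-valued "matrix" monad `A ↦ Q^A`. Unit is `η(a) = λ b. [a = b]`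
(using the quantale unit), bind is matrix composition. -/
noncomputable def qUnit {Q : Type v} [Monoid Q] [CompleteLattice Q]
    {A : Type u} (a : A) : A → Q :=
  fun b => if a = b then 1 else ⊥

/-- Bind of the quantale monad: matrix composition. -/
noncomputable def qBind {Q : Type v} [Monoid Q] [CompleteLattice Q]
    {A B : Type u} (f : A → Q) (k : A → B → Q) : B → Q :=
  fun b => ⨆ a, f a * k a b

section

open Quantale

variable {Q : Type v} [Monoid Q] [CompleteLattice Q] [IsQuantale Q] {A B C : Type u}

theorem qUnit_qBind (a : A) (k : A → B → Q) : qBind (qUnit a) k = k a := by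
  funext b
  simp [qBind, qUnit, ite_mul, iSup_ite]

theorem qBind_qUnit (f : A → Q) : qBind f (fun a => qUnit a) = f := by
  funext b
  simp [qBind, qUnit, mul_ite, iSup_ite]

theorem qBind_qBind (f : A → Q) (k : A → B → Q) (l : B → C → Q) :
    qBind (qBind f k) l = qBind f (fun a => qBind (k a) l) := by
  funext c
  simp only [qBind, iSup_mul_distrib, mul_iSup_distrib, mul_assoc]
  exact iSup_comm

theorem qBind_bot_left (k : A → B → Q) :
    qBind (fun _ : A => (⊥ : Q)) k = fun _ : B => (⊥ : Q) := by
  funext b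
  simp [qBind]

theorem qBind_sup_left (f g : A → Q) (k : A → B → Q) :
    qBind (f ⊔ g) k = qBind f k ⊔ qBind g k := by
  funext b
  simp only [qBind, Pi.sup_apply, sup_mul_distrib, iSup_sup_eq]

end

/-- For any quantale `Q`, the functor `A ↦ Q^A` carries a monad structure (unit
`η(a) = λ b. [a = b]`, multiplication/bind given by matrix composition), and this
monad is semi-additive with `δ` the constant-bottom function and `ϖ` the
pointwise join. -/
theorem quantale_monad_semiAdditive (Q : Type v) [Monoid Q] [CompleteLattice Q]
    [IsQuantale Q] :
    -- monad laws:
    (∀ (A B : Type u) (a : A) (k : A → B → Q), qBind (qUnit a) k = k a) ∧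
    (∀ (A : Type u) (f : A → Q), qBind f (fun a => qUnit a) = f) ∧
    (∀ (A B C : Type u) (f : A → Q) (k : A → B → Q) (l : B → C → Q),
      qBind (qBind f k) l = qBind f (fun a => qBind (k a) l)) ∧
    -- each `Q^A` is a bounded join-semilattice with `δ = ⊥` and `ϖ = ⊔` pointwise
    -- (this holds since `Q^A` is a complete lattice), and the monad is
    -- semi-additive: bind preserves `δ` and `ϖ` in its first argument:
    (∀ (A B : Type u) (k : A → B → Q),
      qBind (fun _ : A => (⊥ : Q)) k = fun _ : B => (⊥ : Q)) ∧
    (∀ (A B : Type u) (f g : A → Q) (k : A → B → Q),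
      qBind (f ⊔ g) k = qBind f k ⊔ qBind g k) :=
  ⟨fun _ _ => qUnit_qBind, fun _ => qBind_qUnit, fun _ _ _ => qBind_qBind,
    fun _ _ => qBind_bot_left, fun _ _ => qBind_sup_left⟩
end

section
/- If T is a semi-additive monad on a category with binary coproducts, then the exception monad transformer Q A = T(A + E) is again a semi-additive monad, with join-semilattice structure inherited from T. -/
/-!
Bind of `Q` is bind of `T` against the copairing `[f, η ∘ inr]`. Hence the monad laws of `Q`
follow from those of `T` by a case split on `A + E`, and the semi-additivity laws of `Q` are
instances of those of `T` at the object `A + E`.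
-/

universe u

/-- Exception monad transformer bind: `Q A = T(A + E)`. -/
def excBind {m : Type u → Type u} [Monad m] {E A B : Type u}
    (x : m (A ⊕ E)) (f : A → m (B ⊕ E)) : m (B ⊕ E) :=
  x >>= fun z => match z with
    | Sum.inl a => f a
    | Sum.inr e => pure (Sum.inr e)

section

variable {m : Type u → Type u} [Monad m] {E A B C : Type u}

theorem excBind_eq_bind (x : m (A ⊕ E)) (f : A → m (B ⊕ E)) :
    excBind x f = x >>= Sum.elim f (pure ∘ Sum.inr) := by
  unfold excBind
  congr 1
  funext z
  cases z <;> rfl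

variable [LawfulMonad m]

theorem pure_excBind (a : A) (f : A → m (B ⊕ E)) :
    excBind (pure (Sum.inl a) : m (A ⊕ E)) f = f a := by
  simp [excBind_eq_bind]

theorem excBind_pure (x : m (A ⊕ E)) : excBind x (fun a => pure (Sum.inl a)) = x := by
  rw [excBind_eq_bind, ← Function.comp_def, ← Sum.comp_elim, Sum.elim_inl_inr]
  exact bind_pure x

theorem excBind_assoc (x : m (A ⊕ E)) (f : A → m (B ⊕ E)) (g : B → m (C ⊕ E)) :
    excBind (excBind x f) g = excBind x (fun a => excBind (f a) g) := by
  simp only [excBind_eq_bind, bind_assoc]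
  congr 1
  funext z
  cases z <;> simp

end

theorem exceptionTransformer_semiAdditive_general
    (m : Type u → Type u) [Monad m] [LawfulMonad m]
    (bot : ∀ A : Type u, m A) (join : ∀ {A : Type u}, m A → m A → m A)
    -- … and bind respects the structure in its first argument:
    (bind_bot : ∀ {A B : Type u} (f : A → m B), (bot A) >>= f = bot B)
    (bind_join : ∀ {A B : Type u} (p q : m A) (f : A → m B),
      (join p q) >>= f = join (p >>= f) (q >>= f))
    (E : Type u) :
    -- `Q` is a monad:
    (∀ {A B : Type u} (a : A) (f : A → m (B ⊕ E)),
      excBind (pure (Sum.inl a) : m (A ⊕ E)) f = f a) ∧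
    (∀ {A : Type u} (x : m (A ⊕ E)),
      excBind x (fun a => pure (Sum.inl a)) = x) ∧
    (∀ {A B C : Type u} (x : m (A ⊕ E)) (f : A → m (B ⊕ E)) (g : B → m (C ⊕ E)),
      excBind (excBind x f) g = excBind x (fun a => excBind (f a) g)) ∧
    -- `Q` is semi-additive with structure inherited from `T` (each `Q A` is a
    -- bounded join-semilattice since `Q A = T(A + E)`, and bind respects it):
    (∀ {A B : Type u} (f : A → m (B ⊕ E)),
      excBind (bot (A ⊕ E)) f = bot (B ⊕ E)) ∧
    (∀ {A B : Type u} (p q : m (A ⊕ E)) (f : A → m (B ⊕ E)),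
      excBind (join p q) f = join (excBind p f) (excBind q f)) :=
  ⟨pure_excBind, excBind_pure, excBind_assoc,
    fun f => by rw [excBind_eq_bind, bind_bot],
    fun p q f => by simp only [excBind_eq_bind, bind_join]⟩

/-- If `T` is a semi-additive monad, then the exception monad transformer
`Q A = T(A + E)` is again a semi-additive monad, with join-semilattice structure
inherited from `T`. -/
theorem exceptionTransformer_semiAdditive
    (m : Type u → Type u) [Monad m] [LawfulMonad m]
    (bot : ∀ A : Type u, m A) (join : ∀ {A : Type u}, m A → m A → m A)
    -- `T` is semi-additive: each `T A` is a bounded join-semilattice …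
    (join_assoc : ∀ {A : Type u} (p q r : m A), join p (join q r) = join (join p q) r)
    (join_comm : ∀ {A : Type u} (p q : m A), join p q = join q p)
    (join_idem : ∀ {A : Type u} (p : m A), join p p = p)
    (join_bot : ∀ {A : Type u} (p : m A), join p (bot A) = p)
    -- … and bind respects the structure in its first argument:
    (bind_bot : ∀ {A B : Type u} (f : A → m B), (bot A) >>= f = bot B)
    (bind_join : ∀ {A B : Type u} (p q : m A) (f : A → m B),
      (join p q) >>= f = join (p >>= f) (q >>= f))
    (E : Type u) :
    -- `Q` is a monad:
    (∀ {A B : Type u} (a : A) (f : A → m (B ⊕ E)),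
      excBind (pure (Sum.inl a) : m (A ⊕ E)) f = f a) ∧
    (∀ {A : Type u} (x : m (A ⊕ E)),
      excBind x (fun a => pure (Sum.inl a)) = x) ∧
    (∀ {A B C : Type u} (x : m (A ⊕ E)) (f : A → m (B ⊕ E)) (g : B → m (C ⊕ E)),
      excBind (excBind x f) g = excBind x (fun a => excBind (f a) g)) ∧
    -- `Q` is semi-additive with structure inherited from `T` (each `Q A` is a
    -- bounded join-semilattice since `Q A = T(A + E)`, and bind respects it):
    (∀ {A B : Type u} (f : A → m (B ⊕ E)),
      excBind (bot (A ⊕ E)) f = bot (B ⊕ E)) ∧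
    (∀ {A B : Type u} (p q : m (A ⊕ E)) (f : A → m (B ⊕ E)),
      excBind (join p q) f = join (excBind p f) (excBind q f)) :=
  exceptionTransformer_semiAdditive_general m bot join bind_bot bind_join E
end

section
/- If T is a semi-additive monad on a Cartesian closed category, then the state monad transformer Q A = S → T(A × S) is again a semi-additive monad, with δ and ϖ defined pointwise. -/
universe u

/-- State monad transformer bind: `Q A = S → T(A × S)`. -/
def stBind {m : Type u → Type u} [Monad m] {S A B : Type u}
    (x : S → m (A × S)) (f : A → S → m (B × S)) : S → m (B × S) :=
  fun s => x s >>= fun p => f p.1 p.2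

/-- State monad transformer unit. -/
def stPure {m : Type u → Type u} [Monad m] {S A : Type u} (a : A) : S → m (A × S) :=
  fun s => pure (a, s)

/-! `stBind` and `stPure` are definitionally the bind and unit of `StateT S m`, so the monad laws
are inherited from Mathlib's lawful `StateT`. Since `δ` and `ϖ` act pointwise in the state and
`stBind` at a fixed state is a bind in `T`, the semi-additivity equations for `Q` are those of `T`
at each state. -/

section StateTransformer

variable {m : Type u → Type u} [Monad m] {S A B : Type u}

theorem stPure_stBind [LawfulMonad m] (a : A) (f : A → S → m (B × S)) :
    stBind (stPure a) f = f a :=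
  pure_bind (m := StateT S m) a f

theorem stBind_stPure [LawfulMonad m] (x : S → m (A × S)) :
    stBind x (fun a => stPure a) = x :=
  bind_pure (m := StateT S m) x

theorem stBind_assoc [LawfulMonad m] {C : Type u} (x : S → m (A × S))
    (f : A → S → m (B × S)) (g : B → S → m (C × S)) :
    stBind (stBind x f) g = stBind x (fun a => stBind (f a) g) :=
  bind_assoc (m := StateT S m) x f g

theorem stBind_const {x : m (A × S)} {y : m (B × S)}
    (h : ∀ g : A × S → m (B × S), x >>= g = y) (f : A → S → m (B × S)) :
    stBind (fun _ : S => x) f = fun _ : S => y :=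
  funext fun _ => h _

theorem stBind_pointwise {opA : m (A × S) → m (A × S) → m (A × S)}
    {opB : m (B × S) → m (B × S) → m (B × S)}
    (h : ∀ (p q : m (A × S)) (g : A × S → m (B × S)), opA p q >>= g = opB (p >>= g) (q >>= g))
    (p q : S → m (A × S)) (f : A → S → m (B × S)) :
    stBind (fun s => opA (p s) (q s)) f = fun s => opB (stBind p f s) (stBind q f s) :=
  funext fun _ => h _ _ _

end StateTransformer

/-- If `T` is a semi-additive monad (on a Cartesian closed category), then the
state monad transformer `Q A = S → T(A × S)` is again a semi-additive monad,
with `δ` and `ϖ` defined pointwise. -/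
theorem stateTransformer_semiAdditive
    (m : Type u → Type u) [Monad m] [LawfulMonad m]
    (bot : ∀ A : Type u, m A) (join : ∀ {A : Type u}, m A → m A → m A)
    -- `T` is semi-additive:
    (join_assoc : ∀ {A : Type u} (p q r : m A), join p (join q r) = join (join p q) r)
    (join_comm : ∀ {A : Type u} (p q : m A), join p q = join q p)
    (join_idem : ∀ {A : Type u} (p : m A), join p p = p)
    (join_bot : ∀ {A : Type u} (p : m A), join p (bot A) = p)
    (bind_bot : ∀ {A B : Type u} (f : A → m B), (bot A) >>= f = bot B)
    (bind_join : ∀ {A B : Type u} (p q : m A) (f : A → m B),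
      (join p q) >>= f = join (p >>= f) (q >>= f))
    (S : Type u) :
    -- `Q` is a monad:
    (∀ {A B : Type u} (a : A) (f : A → S → m (B × S)),
      stBind (stPure a) f = f a) ∧
    (∀ {A : Type u} (x : S → m (A × S)), stBind x (fun a => stPure a) = x) ∧
    (∀ {A B C : Type u} (x : S → m (A × S)) (f : A → S → m (B × S))
        (g : B → S → m (C × S)),
      stBind (stBind x f) g = stBind x (fun a => stBind (f a) g)) ∧
    -- `Q` is semi-additive with `δ` and `ϖ` defined pointwise: the pointwise
    -- structure is a bounded join-semilattice …
    (∀ {A : Type u} (p q r : S → m (A × S)),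
      (fun s => join (p s) (join (q s) (r s))) =
        fun s => join (join (p s) (q s)) (r s)) ∧
    (∀ {A : Type u} (p q : S → m (A × S)),
      (fun s => join (p s) (q s)) = fun s => join (q s) (p s)) ∧
    (∀ {A : Type u} (p : S → m (A × S)), (fun s => join (p s) (p s)) = p) ∧
    (∀ {A : Type u} (p : S → m (A × S)),
      (fun s => join (p s) (bot (A × S))) = p) ∧
    -- … and bind respects it in its first argument:
    (∀ {A B : Type u} (f : A → S → m (B × S)),
      stBind (fun _ : S => bot (A × S)) f = fun _ : S => bot (B × S)) ∧
    (∀ {A B : Type u} (p q : S → m (A × S)) (f : A → S → m (B × S)),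
      stBind (fun s => join (p s) (q s)) f =
        fun s => join (stBind p f s) (stBind q f s)) :=
  ⟨stPure_stBind, stBind_stPure, stBind_assoc,
    fun _ _ _ => funext fun _ => join_assoc _ _ _,
    fun _ _ => funext fun _ => join_comm _ _,
    fun _ => funext fun _ => join_idem _,
    fun _ => funext fun _ => join_bot _,
    fun f => stBind_const bind_bot f,
    fun p q f => stBind_pointwise bind_join p q f⟩
end

section
/- The resumption construction RA = νγ.T(γ + A) extends to a monad R on C: the unit is out⁻¹ ∘ η_T ∘ inr, and bind is definable by corecursion; the three monad laws hold. -/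
open CategoryTheory CategoryTheory.Limits

/-!
`bind f` is the apomorphism into the final coalgebra `R B` that unfolds `R A` through `out A`
and, on reaching a leaf `a`, hands over the whole resumption `f a`. Uniqueness of solutions
of the corecursive equation then gives the right unit law (the identity solves the equation
for `η_R`) and associativity (`bind f ≫ bind g` solves the equation for `f ≫ bind g`); the left
unit law is one unfolding of `bind f` followed by cancelling `out`.
-/

universe v u

section FinalCoalgebra

variable {C : Type u} [Category.{v} C]

def IsFinalCoalgebra (F : C ⥤ C) {Z : C} (ζ : Z ⟶ F.obj Z) : Prop :=
  ∀ (X : C) (c : X ⟶ F.obj X), ∃! h : X ⟶ Z, h ≫ ζ = c ≫ F.map h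

variable {F : C ⥤ C} {Z : C} {ζ : Z ⟶ F.obj Z}

theorem IsFinalCoalgebra.eq_id (hZ : IsFinalCoalgebra F ζ) {k : Z ⟶ Z}
    (hk : k ≫ ζ = ζ ≫ F.map k) : k = 𝟙 Z :=
  (hZ Z ζ).unique hk (by simp)

/-- Corecursion that may stop by handing over an element of `Z` (an apomorphism). -/
theorem IsFinalCoalgebra.existsUnique_apo [HasBinaryCoproducts C]
    (hZ : IsFinalCoalgebra F ζ) {X : C} (c : X ⟶ F.obj (X ⨿ Z)) :
    ∃! k : X ⟶ Z, k ≫ ζ = c ≫ F.map (coprod.desc k (𝟙 Z)) := by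
  obtain ⟨h, hh, hu⟩ := hZ (X ⨿ Z) (coprod.desc c (ζ ≫ F.map coprod.inr))
  have hinr : coprod.inr ≫ h = 𝟙 Z := hZ.eq_id <| by
    simp only [Category.assoc, hh, coprod.inr_desc_assoc, ← F.map_comp]
  have h_eq : coprod.desc (coprod.inl ≫ h) (𝟙 Z) = h :=
    coprod.hom_ext (coprod.inl_desc _ _) (by rw [coprod.inr_desc, hinr])
  refine ⟨coprod.inl ≫ h, ?_, fun k hk => ?_⟩
  · dsimp only
    rw [h_eq, Category.assoc, hh, coprod.inl_desc_assoc]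
  · have hk_desc : coprod.desc k (𝟙 Z) = h := hu _ <| by
      apply coprod.hom_ext
      · rw [coprod.inl_desc_assoc, hk, coprod.inl_desc_assoc]
      · rw [coprod.inr_desc_assoc, coprod.inr_desc_assoc, Category.id_comp, Category.assoc,
          ← F.map_comp, coprod.inr_desc, F.map_id, Category.comp_id]
    rw [← hk_desc, coprod.inl_desc]

end FinalCoalgebra

section Resumption

variable {C : Type u} [Category.{v} C] [HasBinaryCoproducts C] (T : Monad C) {R : C → C}
  (out : ∀ A : C, R A ⟶ T.obj (R A ⨿ A))

def IsBind {A B : C} (f : A ⟶ R B) (k : R A ⟶ R B) : Prop :=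
  k ≫ out B = out A ≫
    T.map (coprod.desc (k ≫ coprod.inl ≫ T.η.app (R B ⨿ B)) (f ≫ out B)) ≫ T.μ.app (R B ⨿ B)

/-- Leaves `a` are relabelled by `f a` wrapped in `inr`, a marker that tells the apomorphism to
continue with the given resumption instead of corecursing. -/
noncomputable def bindStep {A B : C} (f : A ⟶ R B) : R A ⟶ T.obj ((R A ⨿ R B) ⨿ B) :=
  out A ≫ T.map (coprod.desc (coprod.inl ≫ coprod.inl ≫ T.η.app ((R A ⨿ R B) ⨿ B))
      (f ≫ out B ≫ T.map (coprod.map coprod.inr (𝟙 B)))) ≫ T.μ.app ((R A ⨿ R B) ⨿ B)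

theorem bindStep_comp_map {A B : C} (f : A ⟶ R B) (k : R A ⟶ R B) :
    bindStep T out f ≫ T.map (coprod.map (coprod.desc k (𝟙 (R B))) (𝟙 B)) =
      out A ≫ T.map (coprod.desc (k ≫ coprod.inl ≫ T.η.app (R B ⨿ B)) (f ≫ out B)) ≫
        T.μ.app (R B ⨿ B) := by
  rw [bindStep, Category.assoc, Category.assoc, ← T.mu_naturality, ← T.map_comp_assoc]
  congr 3
  apply coprod.hom_ext
  · rw [coprod.inl_desc_assoc, Category.assoc, Category.assoc, ← T.unit_naturality,
      coprod.inl_map_assoc, coprod.inl_desc_assoc, coprod.inl_desc]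
  · simp only [coprod.inr_desc_assoc, Category.assoc, ← T.map_comp, coprod.map_map,
      coprod.inr_desc, Category.comp_id, coprod.map_id_id, T.map_id]

theorem existsUnique_isBind {A B : C}
    (hB : IsFinalCoalgebra (coprod.functor.flip.obj B ⋙ T.toFunctor) (out B)) (f : A ⟶ R B) :
    ∃! k : R A ⟶ R B, IsBind T out f k := by
  simp only [IsBind, ← bindStep_comp_map]
  exact hB.existsUnique_apo (bindStep T out f)

variable {T out}

theorem IsBind.unit_comp {A B : C} [IsIso (out A)] [Mono (out B)] {f : A ⟶ R B} {k : R A ⟶ R B}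
    (hk : IsBind T out f k) : (coprod.inr ≫ T.η.app (R A ⨿ A) ≫ inv (out A)) ≫ k = f := by
  rw [← cancel_mono (out B), Category.assoc, Category.assoc, Category.assoc, hk,
    IsIso.inv_hom_id_assoc, ← T.unit_naturality_assoc, coprod.inr_desc_assoc, Category.assoc,
    T.left_unit]
  dsimp only [Functor.id_obj]
  rw [Category.comp_id]

theorem isBind_unit_id (A : C) [IsIso (out A)] :
    IsBind T out (coprod.inr ≫ T.η.app (R A ⨿ A) ≫ inv (out A)) (𝟙 (R A)) := by
  rw [IsBind, Category.id_comp, Category.id_comp, Category.assoc, Category.assoc,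
    IsIso.inv_hom_id, Category.comp_id, ← coprod.desc_comp, coprod.desc_inl_inr,
    Category.id_comp, T.right_unit]
  exact (Category.comp_id _).symm

theorem IsBind.comp {A B D : C} {f : A ⟶ R B} {g : B ⟶ R D} {k : R A ⟶ R B} {l : R B ⟶ R D}
    (hk : IsBind T out f k) (hl : IsBind T out g l) : IsBind T out (f ≫ l) (k ≫ l) := by
  rw [IsBind, Category.assoc, hl, reassoc_of% hk, ← T.mu_naturality_assoc, ← T.assoc,
    ← T.map_comp_assoc, ← T.map_comp_assoc]
  congr 3
  apply coprod.hom_ext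
  · rw [Category.assoc, coprod.inl_desc_assoc, Category.assoc, Category.assoc,
      ← T.unit_naturality_assoc, T.left_unit, coprod.inl_desc_assoc]
    dsimp only [Functor.id_obj]
    rw [Category.comp_id, coprod.inl_desc, Category.assoc]
  · rw [Category.assoc, coprod.inr_desc_assoc, coprod.inr_desc, Category.assoc, Category.assoc,
      ← hl]

end Resumption

/-- The resumption construction `RA = νγ.T(γ + A)` extends to a monad `R` on `C`:
the unit is `out⁻¹ ∘ η_T ∘ inr`, and bind is definable by corecursion (it is the
unique morphism satisfying the corecursive equation); the three monad laws hold. -/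
theorem resumption_monad {C : Type u} [Category.{v} C] [HasBinaryCoproducts C]
    (T : Monad C) (R : C → C)
    (out : ∀ A : C, R A ⟶ T.obj (R A ⨿ A))
    -- each `(R A, out A)` is a final coalgebra of `X ↦ T(X + A)`:
    (hfin : ∀ (A X : C) (f : X ⟶ T.obj (X ⨿ A)),
      ∃! h : X ⟶ R A, h ≫ out A = f ≫ T.map (coprod.map h (𝟙 A)))
    -- `out A` is an isomorphism (by Lambek's lemma):
    [∀ A : C, IsIso (out A)] :
    ∃ bind : ∀ A B : C, (A ⟶ R B) → (R A ⟶ R B),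
      -- bind is given by corecursion:
      (∀ (A B : C) (f : A ⟶ R B),
        bind A B f ≫ out B =
          out A ≫
            T.map (coprod.desc (bind A B f ≫ coprod.inl ≫ T.η.app (R B ⨿ B))
              (f ≫ out B)) ≫ T.μ.app (R B ⨿ B)) ∧
      -- with the unit `η_R := out⁻¹ ∘ η_T ∘ inr`, the three monad laws hold:
      (∀ (A B : C) (f : A ⟶ R B),
        (coprod.inr ≫ T.η.app (R A ⨿ A) ≫ inv (out A)) ≫ bind A B f = f) ∧
      (∀ A : C, bind A A (coprod.inr ≫ T.η.app (R A ⨿ A) ≫ inv (out A)) = 𝟙 (R A)) ∧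
      (∀ (A B D : C) (f : A ⟶ R B) (g : B ⟶ R D),
        bind A B f ≫ bind B D g = bind A D (f ≫ bind B D g)) := by
  choose bind isBind_bind eq_bind using
    fun A B (f : A ⟶ R B) => existsUnique_isBind T out (hfin B) f
  exact ⟨bind, isBind_bind, fun A B f => (isBind_bind A B f).unit_comp,
    fun A => (eq_bind A A _ _ (isBind_unit_id A)).symm,
    fun A B D f g => eq_bind A D _ _ ((isBind_bind A B f).comp (isBind_bind B D g))⟩
end

section
/- Guarded corecursion (single equation): let T be a monad with final coalgebras RA = νγ.T(γ+A). Given a coalgebra-like map consisting of p : X → T(X₁ + X₂), a 'corecursive' branch (so the first summand calls f recursively) and a non-recursive branch q : X₂ → T(RA + A), there exists a unique f : X → RA satisfying out ∘ f = [T(f·br₁), q-branch]-style equation: out(f(x)) = do z ← p(x); case z of inl x₁ ↦ ret(inl (f(x₁))); inr x₂ ↦ q(x₂). -/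
/-!
Adjoin the final coalgebra to the state space: on `X ⊕ RA`, a point `inl x` runs `p x` and
either jumps to `inl (br x₁)` or hands over to `q x₂` in the `RA` summand, while a point `inr r`
just unfolds `out r`. A map `f : X → RA` solves the guarded equation exactly when `[f, id]` is a
coalgebra morphism into `RA`, and every such morphism is `id` on `RA` by finality, so solutions
correspond to the unique morphism given by coiteration.
-/

universe u

namespace GuardedCorecursion

variable {m : Type u → Type u} [Monad m] {A X X₁ X₂ Y Z : Type u}

def IsCoalgHom (c : X → m (X ⊕ A)) (d : Y → m (Y ⊕ A)) (h : X → Y) : Prop :=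
  ∀ x, d (h x) = Sum.map h id <$> c x

def SolvesGuarded (d : Y → m (Y ⊕ A)) (p : X → m (X₁ ⊕ X₂)) (br : X₁ → X)
    (q : X₂ → m (Y ⊕ A)) (f : X → Y) : Prop :=
  ∀ x, d (f x) = p x >>= Sum.elim (fun x₁ => pure (.inl (f (br x₁)))) q

def guardedCoalg (d : Y → m (Y ⊕ A)) (p : X → m (X₁ ⊕ X₂)) (br : X₁ → X)
    (q : X₂ → m (Y ⊕ A)) : X ⊕ Y → m ((X ⊕ Y) ⊕ A) :=
  Sum.elim
    (fun x => p x >>= Sum.elim (fun x₁ => pure (.inl (.inl (br x₁)))) (Sum.map .inr id <$> q ·))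
    (Sum.map .inr id <$> d ·)

variable (d : Y → m (Y ⊕ A)) (p : X → m (X₁ ⊕ X₂)) (br : X₁ → X) (q : X₂ → m (Y ⊕ A))

theorem isCoalgHom_inr_guardedCoalg : IsCoalgHom d (guardedCoalg d p br q) Sum.inr :=
  fun _ => rfl

variable [LawfulMonad m]

theorem isCoalgHom_id (c : X → m (X ⊕ A)) : IsCoalgHom c c id := fun x => by
  rw [Sum.map_id_id, id_map, id]

theorem IsCoalgHom.comp {c₁ : X → m (X ⊕ A)} {c₂ : Y → m (Y ⊕ A)} {c₃ : Z → m (Z ⊕ A)}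
    {h : Y → Z} {g : X → Y} (hh : IsCoalgHom c₂ c₃ h) (hg : IsCoalgHom c₁ c₂ g) :
    IsCoalgHom c₁ c₃ (h ∘ g) := fun x => by
  rw [Function.comp_apply, hh, hg, Functor.map_map]
  congr 1
  funext z
  exact Sum.map_map _ _ _ _ z

theorem eq_id_of_isCoalgHom (hd : ∃! h : Y → Y, IsCoalgHom d d h) {h : Y → Y}
    (hh : IsCoalgHom d d h) : h = id :=
  hd.unique hh (isCoalgHom_id d)

theorem map_elim_id_comp_map_inr {W : Type u} (f : X → Y) (t : m (Y ⊕ W)) :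
    Sum.map (Sum.elim f id) id <$> Sum.map Sum.inr id <$> t = t := by
  rw [Functor.map_map]
  conv_rhs => rw [← id_map t]
  congr 1
  funext z
  cases z <;> rfl

theorem solvesGuarded_iff_isCoalgHom (f : X → Y) :
    SolvesGuarded d p br q f ↔ IsCoalgHom (guardedCoalg d p br q) d (Sum.elim f id) := by
  have map_inl (x : X) : Sum.map (Sum.elim f id) id <$> guardedCoalg d p br q (.inl x) =
      p x >>= Sum.elim (fun x₁ => pure (.inl (f (br x₁)))) q := by
    rw [guardedCoalg, Sum.elim_inl, map_bind]
    congr 1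
    funext z
    cases z with
    | inl x₁ => rw [Sum.elim_inl, Sum.elim_inl, map_pure]; rfl
    | inr x₂ => exact map_elim_id_comp_map_inr f (q x₂)
  have map_inr (y : Y) : Sum.map (Sum.elim f id) id <$> guardedCoalg d p br q (.inr y) = d y :=
    map_elim_id_comp_map_inr f (d y)
  simp only [SolvesGuarded, IsCoalgHom, Sum.forall, Sum.elim_inl, Sum.elim_inr, map_inl,
    map_inr, id, implies_true, and_true]

theorem existsUnique_solvesGuarded
    (hfin : ∀ {Z : Type u} (c : Z → m (Z ⊕ A)), ∃! h : Z → Y, IsCoalgHom c d h) :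
    ∃! f, SolvesGuarded d p br q f := by
  obtain ⟨h, hh, h_unique⟩ := hfin (guardedCoalg d p br q)
  have h_inr : h ∘ Sum.inr = id :=
    eq_id_of_isCoalgHom d (hfin d) (hh.comp (isCoalgHom_inr_guardedCoalg d p br q))
  have h_eq : Sum.elim (h ∘ Sum.inl) id = h := by rw [← h_inr, Sum.elim_comp_inl_inr]
  refine ⟨h ∘ Sum.inl, (solvesGuarded_iff_isCoalgHom d p br q _).2 (h_eq ▸ hh), fun f hf => ?_⟩
  rw [← h_unique _ ((solvesGuarded_iff_isCoalgHom d p br q f).1 hf), Sum.elim_comp_inl]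

end GuardedCorecursion

/-- Guarded corecursion (single equation): given `p : X → T(X₁ + X₂)`, a
recursive branch (the first summand calls `f` corecursively, via `br : X₁ → X`)
and a non-recursive branch `q : X₂ → T(RA + A)`, there exists a unique
`f : X → RA` satisfying
`out(f(x)) = do z ← p(x); case z of inl x₁ ↦ ret(inl (f(br x₁))); inr x₂ ↦ q(x₂)`. -/
theorem guarded_corecursion
    (m : Type u → Type u) [Monad m] [LawfulMonad m]
    (R : Type u → Type u)
    (out : {A : Type u} → R A → m (R A ⊕ A))
    -- `R A` with `out` is the final coalgebra of `X ↦ T(X + A)`: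
    (hfin : ∀ {X A : Type u} (c : X → m (X ⊕ A)),
      ∃! h : X → R A, ∀ x, out (h x) = Sum.map h id <$> c x)
    {X X₁ X₂ A : Type u}
    (p : X → m (X₁ ⊕ X₂)) (br : X₁ → X) (q : X₂ → m (R A ⊕ A)) :
    ∃! f : X → R A, ∀ x,
      out (f x) = p x >>= fun z =>
        match z with
        | Sum.inl x₁ => pure (Sum.inl (f (br x₁)))
        | Sum.inr x₂ => q x₂ := by
  refine (existsUnique_congr fun f => forall_congr' fun x => ?_).1
    (GuardedCorecursion.existsUnique_solvesGuarded out p br q fun c => hfin c)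
  -- the statement's `match` is `Sum.elim` only up to case analysis, not definitionally
  rw [iff_eq_eq]
  congr 2
  funext z
  cases z <;> rfl
end

section
/- Mutual corecursion reduces to single corecursion: a system of k guarded corecursive equations defining f_i : A_i → RB (each right-hand side binds z ← p_i with p_i containing no f_j, and each case branch either contains no recursive call or is exactly ret(inl(f_m(x_j)))) has a unique solution, obtained by defining a single function F : A_1 + ⋯ + A_k → RB by guarded corecursion and setting f_i = F ∘ inj_i. -/
universe u

/-!
Guarded corecursion for a specification `e : X → T(X + T(RB + B))` is reduced to finality on the
coalgebra `X + RB → T((X + RB) + B)` that runs `e` on `X` and `out` on `RB`. Its unique morphism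
into `RB` is the identity on `RB` (by finality of `RB` itself), so it has the form `[F, id]`; and
`[F, id]` is a coalgebra morphism exactly when `F` solves the guarded equation. A system of
mutually corecursive equations indexed by `ι` is a single guarded equation on `Σ i, A i`.
-/

namespace GuardedCorec

variable {m : Type u → Type u} [Monad m] [LawfulMonad m] {B X Y Z : Type u}

def IsCoalgHom (cX : X → m (X ⊕ B)) (cY : Y → m (Y ⊕ B)) (h : X → Y) : Prop :=
  ∀ x, cY (h x) = Sum.map h id <$> cX x

theorem IsCoalgHom.id (c : X → m (X ⊕ B)) : IsCoalgHom c c id := by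
  intro x
  rw [Sum.map_id_id, id_map]
  rfl

theorem eq_id_of_isCoalgHom_of_final {out : Z → m (Z ⊕ B)}
    (hfin : ∃! h : Z → Z, IsCoalgHom out out h) {k : Z → Z} (hk : IsCoalgHom out out k) :
    k = id :=
  hfin.unique hk (IsCoalgHom.id out)

def guardedStep (F : X → Z) : X ⊕ m (Z ⊕ B) → m (Z ⊕ B)
  | .inl w => pure (.inl (F w))
  | .inr t => t

def guardedCoalg (out : Z → m (Z ⊕ B)) (e : X → m (X ⊕ m (Z ⊕ B))) :
    X ⊕ Z → m ((X ⊕ Z) ⊕ B)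
  | .inl x => e x >>= Sum.elim (fun w => pure (.inl (.inl w))) (Sum.map .inr id <$> ·)
  | .inr r => Sum.map .inr id <$> out r

theorem map_sumElim_map_inr (F : X → Z) (t : m (Z ⊕ B)) :
    Sum.map (Sum.elim F id) id <$> (Sum.map .inr id <$> t) = t := by
  simp only [Functor.map_map, Sum.map_map, Sum.elim_comp_inr, Function.comp_id, Sum.map_id_id,
    id_map]

theorem isCoalgHom_sumElim_iff (out : Z → m (Z ⊕ B)) (e : X → m (X ⊕ m (Z ⊕ B))) (F : X → Z) :
    IsCoalgHom (guardedCoalg out e) out (Sum.elim F id) ↔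
      ∀ x, out (F x) = e x >>= guardedStep F := by
  have hstep : (fun z => Sum.map (Sum.elim F id) id <$>
      Sum.elim (fun w => pure (.inl (.inl w))) (Sum.map .inr id <$> ·) z) =
      guardedStep (B := B) (m := m) F := by
    funext z
    cases z with
    | inl w => simp [guardedStep]
    | inr t => exact map_sumElim_map_inr F t
  simp only [IsCoalgHom, Sum.forall, Sum.elim_inl, Sum.elim_inr, guardedCoalg, map_bind, hstep,
    map_sumElim_map_inr, id, implies_true, and_true]

theorem existsUnique_guardedCorec (out : Z → m (Z ⊕ B))
    (hfin : ∀ (W : Type u) (c : W → m (W ⊕ B)), ∃! h : W → Z, IsCoalgHom c out h)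
    (e : X → m (X ⊕ m (Z ⊕ B))) :
    ∃! F : X → Z, ∀ x, out (F x) = e x >>= guardedStep F := by
  obtain ⟨h, hh, huniq⟩ := hfin _ (guardedCoalg out e)
  have h_inr : h ∘ Sum.inr = id :=
    eq_id_of_isCoalgHom_of_final (hfin Z out) fun r => by
      simpa [guardedCoalg, Sum.map_map, Function.comp_def] using hh (.inr r)
  have h_eq : h = Sum.elim (h ∘ Sum.inl) id := by
    rw [← h_inr, Sum.elim_comp_inl_inr]
  refine ⟨h ∘ Sum.inl, (isCoalgHom_sumElim_iff out e _).1 (h_eq ▸ hh), fun F hF => ?_⟩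
  exact congrArg (· ∘ Sum.inl) (huniq _ ((isCoalgHom_sumElim_iff out e F).2 hF))

end GuardedCorec

open GuardedCorec in
/-- Mutual corecursion reduces to single corecursion: a system of guarded
corecursive equations defining `f i : A i → R B` (each right-hand side binds
`z ← p_i` where `p_i` contains no `f j`, and each case branch either contains
no recursive call — yielding a term `t : T(RB + B)` — or is exactly
`ret(inl(f j a))`) has a unique solution, and the solution is obtained by
defining a single function `F : Σ i, A i → R B` by guarded corecursion and
setting `f i = F ∘ inj_i`. -/
theorem mutual_corecursion
    (m : Type u → Type u) [Monad m] [LawfulMonad m]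
    (R : Type u → Type u)
    (out : {A : Type u} → R A → m (R A ⊕ A))
    -- `R A` with `out` is the final coalgebra of `X ↦ T(X + A)`:
    (hfin : ∀ {X A : Type u} (c : X → m (X ⊕ A)),
      ∃! h : X → R A, ∀ x, out (h x) = Sum.map h id <$> c x)
    {ι : Type u} (A : ι → Type u) (B : Type u)
    -- the guarded corecursive scheme: after binding `z ← p_i`, each branch is
    -- either a recursive call `inl ⟨j, a⟩` (standing for `ret(inl(f j a))`) or a
    -- non-recursive term `inr t` with `t : T(RB + B)`:
    (g : ∀ i, A i → m ((Σ j, A j) ⊕ m (R B ⊕ B))) :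
    (∃! f : ∀ i, A i → R B, ∀ i x,
      out (f i x) = g i x >>= fun z =>
        match z with
        | Sum.inl w => pure (Sum.inl (f w.1 w.2))
        | Sum.inr t => t) ∧
    (∀ f : ∀ i, A i → R B,
      (∀ i x, out (f i x) = g i x >>= fun z =>
        match z with
        | Sum.inl w => pure (Sum.inl (f w.1 w.2))
        | Sum.inr t => t) →
      ∃ F : (Σ i, A i) → R B,
        (∀ s : Σ i, A i, out (F s) = g s.1 s.2 >>= fun z =>
          match z with
          | Sum.inl w => pure (Sum.inl (F w))
          | Sum.inr t => t) ∧
        ∀ i x, f i x = F ⟨i, x⟩) := by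
  -- The statement's `match` compiles to its own matcher, which agrees with `guardedStep` only
  -- after case analysis, not by unification.
  have h_step : ∀ F : (Σ i, A i) → R B,
      guardedStep F = fun z : (Σ i, A i) ⊕ m (R B ⊕ B) =>
      match z with
      | Sum.inl w => pure (Sum.inl (F w))
      | Sum.inr t => t := fun F => by
    funext z
    cases z <;> rfl
  obtain ⟨F, hF, huniq⟩ :=
    existsUnique_guardedCorec (@out B) (fun _ c => hfin c) fun s : Σ i, A i => g s.1 s.2
  simp only [h_step] at hF huniq
  have h_sol : ∀ f : ∀ i, A i → R B,
      (∀ i x, out (f i x) = g i x >>= fun z =>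
        match z with
        | Sum.inl w => pure (Sum.inl (f w.1 w.2))
        | Sum.inr t => t) →
      ∀ i x, f i x = F ⟨i, x⟩ := fun f hf i x =>
    congrFun (huniq (fun s => f s.1 s.2) fun s => hf s.1 s.2) ⟨i, x⟩
  exact ⟨⟨fun i x => F ⟨i, x⟩, fun i x => hF ⟨i, x⟩, fun f hf => funext₂ (h_sol f hf)⟩,
    fun f hf => ⟨F, hF, h_sol f hf⟩⟩
end

section
/- In any monad T, the discardable, copyable programs that commute with all discardable-copyable programs are closed under unit and Kleisli composition; i.e., pure programs form a submonad P of T. -/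
universe u

variable (m : Type u → Type u) [Monad m]

/-- A program `p : T A` is discardable if `(do y ← p; ret ⋆) = ret ⋆`. -/
def Discardable {A : Type u} (p : m A) : Prop :=
  (do let _ ← p; pure PUnit.unit) = (pure PUnit.unit : m PUnit)

/-- A program `p : T A` is copyable if
`(do x ← p; y ← p; ret⟨x,y⟩) = (do x ← p; ret⟨x,x⟩)`. -/
def Copyable {A : Type u} (p : m A) : Prop :=
  (do let x ← p; let y ← p; pure (x, y)) = (do let x ← p; pure (x, x) : m (A × A))

/-- A program is pure if it is discardable, copyable, and commutes with every
discardable and copyable program. -/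
def IsPureProg {A : Type u} (p : m A) : Prop :=
  Discardable m p ∧ Copyable m p ∧
    ∀ {B : Type u} (q : m B), Discardable m q → Copyable m q →
      (do let x ← p; let y ← q; pure (x, y)) =
        ((do let y ← q; let x ← p; pure (x, y)) : m (A × B))

/-!
For a Kleisli composite `p >>= f` of pure programs, discarding `f a` and then `p` shows
discardability, and commuting with `q` passes through `f a` and then through `p`. For copyability, `p` commutes with each `f a` (these are discardable
and copyable), so in `do a ← p; x ← f a; b ← p; y ← f b` the second `p` can be moved next to
the first; copying `p` and then `f a` merges the two runs into one.
-/

section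

variable {m}

variable {A B C : Type u}

def Commutes (p : m A) (q : m B) : Prop :=
  (do let x ← p; let y ← q; pure (x, y)) = ((do let y ← q; let x ← p; pure (x, y)) : m (A × B))

theorem IsPureProg.commutes {p : m A} (hp : IsPureProg m p) {q : m B}
    (hqd : Discardable m q) (hqc : Copyable m q) : Commutes p q :=
  hp.2.2 q hqd hqc

variable [LawfulMonad m]

theorem Discardable.bind_const {p : m A} (h : Discardable m p) (r : m C) :
    (p >>= fun _ => r) = r := by
  simpa only [bind_assoc, pure_bind] using congrArg (· >>= fun _ => r) h

theorem Copyable.bind_bind {p : m A} (h : Copyable m p) (k : A → A → m C) :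
    (do let x ← p; let y ← p; k x y) = (do let x ← p; k x x) := by
  simpa only [bind_assoc, pure_bind] using congrArg (· >>= fun xy => k xy.1 xy.2) h

theorem Commutes.bind_bind {p : m A} {q : m B} (h : Commutes p q) (k : A → B → m C) :
    (do let x ← p; let y ← q; k x y) = (do let y ← q; let x ← p; k x y) := by
  simpa only [bind_assoc, pure_bind] using congrArg (· >>= fun xy => k xy.1 xy.2) h

theorem isPureProg_pure (a : A) : IsPureProg m (pure a) :=
  ⟨by simp [Discardable], by simp [Copyable], fun _ _ _ => by simp⟩

theorem Discardable.bind {p : m A} {f : A → m B} (hp : Discardable m p)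
    (hf : ∀ a, Discardable m (f a)) : Discardable m (p >>= f) := by
  unfold Discardable
  calc (do let _ ← p >>= f; pure PUnit.unit)
      = (do let _ ← p; pure PUnit.unit) := by
        rw [bind_assoc]; exact bind_congr fun a => (hf a).bind_const _
    _ = pure PUnit.unit := by exact hp

theorem Copyable.bind {p : m A} {f : A → m B} (hp : Copyable m p)
    (hf : ∀ a, Copyable m (f a)) (hpf : ∀ a, Commutes p (f a)) : Copyable m (p >>= f) := by
  unfold Copyable
  calc (do let x ← p >>= f; let y ← p >>= f; pure (x, y))
      = (do let a ← p; let x ← f a; let b ← p; let y ← f b; pure (x, y)) := by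
        simp only [bind_assoc]
    _ = (do let a ← p; let b ← p; let x ← f a; let y ← f b; pure (x, y)) :=
        bind_congr fun a => ((hpf a).bind_bind fun b x => do let y ← f b; pure (x, y)).symm
    _ = (do let a ← p; let x ← f a; let y ← f a; pure (x, y)) := hp.bind_bind _
    _ = (do let a ← p; let x ← f a; pure (x, x)) := bind_congr fun a => (hf a).bind_bind _
    _ = (do let x ← p >>= f; pure (x, x)) := by simp only [bind_assoc]

theorem Commutes.bind_left {p : m A} {f : A → m B} {q : m C} (hp : Commutes p q)
    (hf : ∀ a, Commutes (f a) q) : Commutes (p >>= f) q := by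
  unfold Commutes
  calc (do let x ← p >>= f; let y ← q; pure (x, y))
      = (do let a ← p; let x ← f a; let y ← q; pure (x, y)) := by simp only [bind_assoc]
    _ = (do let a ← p; let y ← q; let x ← f a; pure (x, y)) := bind_congr fun a => hf a
    _ = (do let y ← q; let a ← p; let x ← f a; pure (x, y)) := hp.bind_bind _
    _ = (do let y ← q; let x ← p >>= f; pure (x, y)) := by simp only [bind_assoc]

theorem IsPureProg.bind {p : m A} {f : A → m B} (hp : IsPureProg m p)
    (hf : ∀ a, IsPureProg m (f a)) : IsPureProg m (p >>= f) :=
  ⟨hp.1.bind fun a => (hf a).1,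
    hp.2.1.bind (fun a => (hf a).2.1) fun a => hp.commutes (hf a).1 (hf a).2.1,
    fun _ hqd hqc => (hp.commutes hqd hqc).bind_left fun a => (hf a).commutes hqd hqc⟩

end

/-- Pure programs are closed under the monad unit and Kleisli composition,
i.e. pure programs form a submonad `P` of `T`. -/
theorem pure_programs_submonad [LawfulMonad m] :
    (∀ (A : Type u) (a : A), IsPureProg m (pure a)) ∧
    (∀ (A B : Type u) (p : m A) (f : A → m B),
      IsPureProg m p → (∀ a, IsPureProg m (f a)) → IsPureProg m (p >>= f)) :=
  ⟨fun _ => isPureProg_pure, fun _ _ _ _ hp hf => hp.bind hf⟩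
end
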